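/- Let p ≥ 1, C ≥ 1, n ≥ 4, and let f: P_n = {0,1,...,n} → (X,d_X) satisfy λ|x−y| ≤ d_X(f(x),f(y)) ≤ λK|x−y| for all x,y ∈ P_n, for some λ > 0 and K ≥ 1. For i ∈ {0,...,⌊log₂ n⌋} set A_i := {0, 2^i, 2·2^i, ..., ⌊n/2^i⌋·2^i} and L_i := sup{ d_X(f(x),f(y))/(λ·2^i) : x,y ∈ A_i, |x−y| = 2^i }. Then there exist i ∈ {0,...,⌊log₂ n⌋ − 1} and a subset Z = {z₀, z₁, z₂} of A_i with z₁ − z₀ = z₂ − z₁ = 2^i and z₀, z₂ ∈ A_{i+1}, such that, with B = K/(⌊log₂ n⌋·L_{i+1}), for all 0 ≤ j < k ≤ 2: λ·(1 − B)·L_{i+1}·|z_j − z_k| ≤ d_X(f(z_j), f(z_k)) ≤ λ·(1 + B)·L_{i+1}·|z_j − z_k|. Moreover, if n ≥ 2^{⌈2CK^p⌉}, then λ·(1 − 1/(2C·L_{i+1}^p))·L_{i+1}·|z_j − z_k| ≤ d_X(f(z_j), f(z_k)) ≤ λ·(1 + 1/(2C·L_{i+1}^p))·L_{i+1}·|z_j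 − z_k|, and the distortion of f restricted to Z is at most 1 + 2/(C·L_{i+1}^p). -/

import Mathlib

set_option maxHeartbeats 2000000

/-- `A_i = {0, 2^i, 2·2^i, ..., ⌊n/2^i⌋·2^i}`: the multiples of `2^i` in `P_n`. -/
def gridSet (n i : ℕ) : Set ℕ := {m : ℕ | 2 ^ i ∣ m ∧ m ≤ n}

/-- The scaled Lipschitz constants
`L_i = sup { d(f(x),f(y)) / (λ·2^i) : x, y ∈ A_i, |x − y| = 2^i }`. -/
noncomputable def gridL {X : Type*} [MetricSpace X] (n : ℕ) (f : ℕ → X) (lam : ℝ)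
    (i : ℕ) : ℝ :=
  sSup {r : ℝ | ∃ x y : ℕ, x ∈ gridSet n i ∧ y ∈ gridSet n i ∧ y = x + 2 ^ i ∧
    r = dist (f x) (f y) / (lam * 2 ^ i)}

/-- The distortion of `f` restricted to a subset `Z` of the path `P_n`. -/
noncomputable def distortionOn {X : Type*} [MetricSpace X] (f : ℕ → X) (Z : Set ℕ) : ℝ :=
  sSup {r : ℝ | ∃ x ∈ Z, ∃ y ∈ Z, x ≠ y ∧ r = dist (f x) (f y) / |(x : ℝ) - (y : ℝ)|} *
    sSup {r : ℝ | ∃ x ∈ Z, ∃ y ∈ Z, x ≠ y ∧ r = |(x : ℝ) - (y : ℝ)| / dist (f x) (f y)}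

lemma gridL_isGreatest {X : Type*} [MetricSpace X] (n : ℕ) (f : ℕ → X) (lam : ℝ)
    (i : ℕ) (hi : 2 ^ i ≤ n) :
    IsGreatest {r : ℝ | ∃ x y : ℕ, x ∈ gridSet n i ∧ y ∈ gridSet n i ∧ y = x + 2 ^ i ∧
      r = dist (f x) (f y) / (lam * 2 ^ i)} (gridL n f lam i) := by
  set S := {r : ℝ | ∃ x y : ℕ, x ∈ gridSet n i ∧ y ∈ gridSet n i ∧ y = x + 2 ^ i ∧
      r = dist (f x) (f y) / (lam * 2 ^ i)} with hS
  have hsub : S ⊆ (fun x : ℕ => dist (f x) (f (x + 2 ^ i)) / (lam * 2 ^ i)) '' Set.Iic n := by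
    rintro r ⟨x, y, hx, hy, rfl, rfl⟩
    exact ⟨x, hx.2, rfl⟩
  have hfin : S.Finite := (((Set.finite_Iic n).image _)).subset hsub
  have hne : S.Nonempty :=
    ⟨_, 0, 2 ^ i, ⟨dvd_zero _, n.zero_le⟩, ⟨dvd_refl _, hi⟩, (zero_add _).symm, rfl⟩
  exact ⟨hne.csSup_mem hfin, fun r hr => le_csSup hfin.bddAbove hr⟩

lemma cast_abs_add_pow (a b : ℕ) : |(a : ℝ) - ((a + b : ℕ) : ℝ)| = (b : ℝ) := by
  push_cast
  rw [show (a : ℝ) - ((a : ℝ) + b) = -b by ring, abs_neg, abs_of_nonneg (by positivity)]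

/-- **Generalized Path Lemma.**  Let `p ≥ 1`, `C ≥ 1`, `n ≥ 4`, and let `f : P_n → X`
satisfy `λ|x−y| ≤ d(f(x),f(y)) ≤ λK|x−y|`.  Then there are `i < ⌊log₂ n⌋` and
`Z = {z₀, z₁, z₂} ⊆ A_i` with `z₁ − z₀ = z₂ − z₁ = 2^i` and `z₀, z₂ ∈ A_{i+1}` such that,
with `B = K/(⌊log₂ n⌋·L_{i+1})`, for all pairs in `Z`:
`λ(1−B)L_{i+1}|z_j−z_k| ≤ d(f(z_j),f(z_k)) ≤ λ(1+B)L_{i+1}|z_j−z_k|`; moreover, if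
`n ≥ 2^{⌈2CK^p⌉}` the error improves to `1/(2C·L_{i+1}^p)` and
`dist(f|_Z) ≤ 1 + 2/(C·L_{i+1}^p)`. -/
theorem generalized_path_lemma {X : Type*} [MetricSpace X] (p C : ℝ) (hp : 1 ≤ p)
    (hC : 1 ≤ C) (n : ℕ) (hn : 4 ≤ n) (f : ℕ → X) (lam K : ℝ) (hlam : 0 < lam)
    (hK : 1 ≤ K)
    (hf : ∀ x y : ℕ, x ≤ n → y ≤ n →
      lam * |(x : ℝ) - (y : ℝ)| ≤ dist (f x) (f y) ∧
      dist (f x) (f y) ≤ lam * K * |(x : ℝ) - (y : ℝ)|) :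
    ∃ i < Nat.log 2 n, ∃ z₀ z₁ z₂ : ℕ,
      z₀ ∈ gridSet n i ∧ z₁ ∈ gridSet n i ∧ z₂ ∈ gridSet n i ∧
      z₁ = z₀ + 2 ^ i ∧ z₂ = z₁ + 2 ^ i ∧
      z₀ ∈ gridSet n (i + 1) ∧ z₂ ∈ gridSet n (i + 1) ∧
      (∀ x ∈ ({z₀, z₁, z₂} : Set ℕ), ∀ y ∈ ({z₀, z₁, z₂} : Set ℕ),
        lam * (1 - K / ((Nat.log 2 n : ℝ) * gridL n f lam (i + 1))) * gridL n f lam (i + 1)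
            * |(x : ℝ) - (y : ℝ)| ≤ dist (f x) (f y) ∧
        dist (f x) (f y) ≤
          lam * (1 + K / ((Nat.log 2 n : ℝ) * gridL n f lam (i + 1))) * gridL n f lam (i + 1)
            * |(x : ℝ) - (y : ℝ)|) ∧
      ((2 : ℝ) ^ (⌈2 * C * K ^ p⌉₊ : ℕ) ≤ (n : ℝ) →
        (∀ x ∈ ({z₀, z₁, z₂} : Set ℕ), ∀ y ∈ ({z₀, z₁, z₂} : Set ℕ),
          lam * (1 - 1 / (2 * C * gridL n f lam (i + 1) ^ p)) * gridL n f lam (i + 1)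
              * |(x : ℝ) - (y : ℝ)| ≤ dist (f x) (f y) ∧
          dist (f x) (f y) ≤
            lam * (1 + 1 / (2 * C * gridL n f lam (i + 1) ^ p)) * gridL n f lam (i + 1)
              * |(x : ℝ) - (y : ℝ)|) ∧
        distortionOn f ({z₀, z₁, z₂} : Set ℕ) ≤
          1 + 2 / (C * gridL n f lam (i + 1) ^ p)) := by
  have hKpos : (0:ℝ) < K := lt_of_lt_of_le one_pos hK
  set m := Nat.log 2 n with hmdef
  have hm2 : 2 ≤ m := by
    have h4 : (2:ℕ) ^ 2 ≤ n := hn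
    exact (Nat.le_log_iff_pow_le (by norm_num) (by omega)).mpr h4
  have hmR : (0:ℝ) < (m:ℝ) := by exact_mod_cast Nat.lt_of_lt_of_le (by norm_num) hm2
  have hpow : ∀ i ≤ m, 2 ^ i ≤ n := fun i hi =>
    le_trans (Nat.pow_le_pow_right (by norm_num) hi) (Nat.pow_log_le_self 2 (by omega))
  set L : ℕ → ℝ := fun i => gridL n f lam i with hLdef
  -- attainment
  have hattain : ∀ i ≤ m, ∃ x, x ∈ gridSet n i ∧ x + 2 ^ i ∈ gridSet n i ∧
      dist (f x) (f (x + 2 ^ i)) = lam * 2 ^ i * L i := by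
    intro i hi
    obtain ⟨x, y, hx, hy, rfl, hr⟩ := (gridL_isGreatest n f lam i (hpow i hi)).1
    refine ⟨x, hx, hy, ?_⟩
    rw [eq_div_iff (by positivity)] at hr
    rw [← hr]; ring
  -- upper bound property
  have hub : ∀ i ≤ m, ∀ x : ℕ, x ∈ gridSet n i → x + 2 ^ i ∈ gridSet n i →
      dist (f x) (f (x + 2 ^ i)) ≤ lam * 2 ^ i * L i := by
    intro i hi x hx hy
    have h := (gridL_isGreatest n f lam i (hpow i hi)).2 ⟨x, x + 2 ^ i, hx, hy, rfl, rfl⟩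
    rw [div_le_iff₀ (by positivity)] at h
    calc dist (f x) (f (x + 2 ^ i)) ≤ L i * (lam * 2 ^ i) := h
    _ = lam * 2 ^ i * L i := by ring
  have hL1 : ∀ i ≤ m, 1 ≤ L i := by
    intro i hi
    have h := (gridL_isGreatest n f lam i (hpow i hi)).2
      ⟨0, 2 ^ i, ⟨dvd_zero _, n.zero_le⟩, ⟨dvd_refl _, hpow i hi⟩, (zero_add _).symm, rfl⟩
    refine le_trans ?_ h
    rw [le_div_iff₀ (by positivity)]
    have := (hf 0 (2 ^ i) n.zero_le (hpow i hi)).1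
    calc 1 * (lam * 2 ^ i) = lam * |((0:ℕ):ℝ) - ((2 ^ i : ℕ):ℝ)| := by
          push_cast; rw [zero_sub, abs_neg, abs_of_nonneg (by positivity)]; ring
    _ ≤ dist (f 0) (f (2 ^ i)) := this
  have hLK : ∀ i ≤ m, L i ≤ K := by
    intro i hi
    obtain ⟨x, hx, hy, hd⟩ := hattain i hi
    have h2 := (hf x (x + 2 ^ i) hx.2 hy.2).2
    rw [cast_abs_add_pow] at h2
    rw [hd] at h2
    push_cast at h2
    have h2i : (0:ℝ) < 2 ^ i := by positivity
    nlinarith [mul_pos hlam h2i]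
  -- find a good scale i
  have hex : ∃ i < m, L i ≤ L (i + 1) + K / m := by
    by_contra h
    push_neg at h
    have key : ∀ j ≤ m, L j + j * (K / m) ≤ L 0 := by
      intro j hj
      induction j with
      | zero => simp
      | succ j ih =>
        have h1 := h j (by omega)
        have h2 := ih (by omega)
        push_cast
        nlinarith [h1.le]
    have h1 := key m le_rfl
    have h2 := hL1 m le_rfl
    have h3 := hLK 0 (by omega)
    have h4 : (m:ℝ) * (K / m) = K := by field_simp
    linarith
  obtain ⟨i, him, hLi⟩ := hex
  obtain ⟨x₀, hx₀, hx₂', hd02⟩ := hattain (i + 1) (by omega)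
  have h2e : 2 ^ (i + 1) = 2 ^ i + 2 ^ i := by rw [pow_succ, mul_two]
  have hx₂ : x₀ + 2 ^ i + 2 ^ i ∈ gridSet n (i + 1) := by rw [add_assoc, ← h2e]; exact hx₂'
  set L' := L (i + 1) with hL'def
  have hL'1 : 1 ≤ L' := hL1 (i + 1) (by omega)
  have hL'pos : (0:ℝ) < L' := lt_of_lt_of_le one_pos hL'1
  have hL'K : L' ≤ K := hLK (i + 1) (by omega)
  have hdvd : (2:ℕ) ^ i ∣ x₀ := dvd_trans (pow_dvd_pow 2 (Nat.le_succ i)) hx₀.1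
  have hz2n : x₀ + 2 ^ i + 2 ^ i ≤ n := hx₂.2
  have hz0 : x₀ ∈ gridSet n i := ⟨hdvd, hx₀.2⟩
  have hz1 : x₀ + 2 ^ i ∈ gridSet n i := ⟨dvd_add hdvd dvd_rfl, by omega⟩
  have hz2 : x₀ + 2 ^ i + 2 ^ i ∈ gridSet n i := ⟨dvd_add (dvd_add hdvd dvd_rfl) dvd_rfl, hz2n⟩
  -- distance facts
  have hd02' : dist (f x₀) (f (x₀ + 2 ^ i + 2 ^ i)) = lam * 2 * 2 ^ i * L' := by
    rw [add_assoc, ← h2e, hd02]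
    push_cast [pow_succ]
    ring
  have k01up : dist (f x₀) (f (x₀ + 2 ^ i)) ≤ lam * 2 ^ i * (L' + K / m) := by
    refine le_trans (hub i (by omega) x₀ hz0 hz1) ?_
    have : (0:ℝ) < lam * 2 ^ i := by positivity
    nlinarith
  have k12up : dist (f (x₀ + 2 ^ i)) (f (x₀ + 2 ^ i + 2 ^ i)) ≤ lam * 2 ^ i * (L' + K / m) := by
    refine le_trans (hub i (by omega) (x₀ + 2 ^ i) hz1 hz2) ?_
    have : (0:ℝ) < lam * 2 ^ i := by positivity
    nlinarith
  have htri : dist (f x₀) (f (x₀ + 2 ^ i + 2 ^ i)) ≤ dist (f x₀) (f (x₀ + 2 ^ i)) +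
      dist (f (x₀ + 2 ^ i)) (f (x₀ + 2 ^ i + 2 ^ i)) := dist_triangle _ _ _
  have k01lo : lam * 2 ^ i * (L' - K / m) ≤ dist (f x₀) (f (x₀ + 2 ^ i)) := by
    nlinarith [hd02', htri, k12up]
  have k12lo : lam * 2 ^ i * (L' - K / m) ≤ dist (f (x₀ + 2 ^ i)) (f (x₀ + 2 ^ i + 2 ^ i)) := by
    nlinarith [hd02', htri, k01up]
  have habs01 : |((x₀:ℕ) : ℝ) - ((x₀ + 2 ^ i : ℕ) : ℝ)| = (2:ℝ) ^ i := by
    rw [cast_abs_add_pow]; push_cast; ring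
  have habs12 : |((x₀ + 2 ^ i : ℕ) : ℝ) - ((x₀ + 2 ^ i + 2 ^ i : ℕ) : ℝ)| = (2:ℝ) ^ i := by
    rw [cast_abs_add_pow]; push_cast; ring
  have habs02 : |((x₀:ℕ) : ℝ) - ((x₀ + 2 ^ i + 2 ^ i : ℕ) : ℝ)| = 2 * (2:ℝ) ^ i := by
    rw [add_assoc, cast_abs_add_pow]; push_cast; ring
  -- main symmetric bounds
  have key : ∀ x ∈ ({x₀, x₀ + 2 ^ i, x₀ + 2 ^ i + 2 ^ i} : Set ℕ),
      ∀ y ∈ ({x₀, x₀ + 2 ^ i, x₀ + 2 ^ i + 2 ^ i} : Set ℕ),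
      lam * (L' - K / m) * |(x : ℝ) - (y : ℝ)| ≤ dist (f x) (f y) ∧
      dist (f x) (f y) ≤ lam * (L' + K / m) * |(x : ℝ) - (y : ℝ)| := by
    intro x hx y hy
    simp only [Set.mem_insert_iff, Set.mem_singleton_iff] at hx hy
    have hKm0 : (0:ℝ) ≤ K / m := div_nonneg hKpos.le hmR.le
    have hprod : (0:ℝ) ≤ lam * 2 ^ i * (K / m) := mul_nonneg (by positivity) hKm0
    rcases hx with rfl | rfl | rfl <;> rcases hy with rfl | rfl | rfl
    · simp
    · rw [habs01]; exact ⟨by linarith [k01lo], by linarith [k01up]⟩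
    · rw [habs02, hd02']; exact ⟨by linarith, by linarith⟩
    · rw [abs_sub_comm, habs01, dist_comm]
      exact ⟨by linarith [k01lo], by linarith [k01up]⟩
    · simp
    · rw [habs12]; exact ⟨by linarith [k12lo], by linarith [k12up]⟩
    · rw [abs_sub_comm, habs02, dist_comm, hd02']; exact ⟨by linarith, by linarith⟩
    · rw [abs_sub_comm, habs12, dist_comm]
      exact ⟨by linarith [k12lo], by linarith [k12up]⟩
    · simp
  have hBlo : lam * (1 - K / ((m:ℝ) * L')) * L' = lam * (L' - K / m) := by
    field_simp
  have hBhi : lam * (1 + K / ((m:ℝ) * L')) * L' = lam * (L' + K / m) := by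
    field_simp
  refine ⟨i, him, x₀, x₀ + 2 ^ i, x₀ + 2 ^ i + 2 ^ i, hz0, hz1, hz2, rfl, rfl, hx₀, hx₂,
    ?_, ?_⟩
  · intro x hx y hy
    obtain ⟨h1, h2⟩ := key x hx y hy
    exact ⟨by rw [hBlo]; exact h1, by rw [hBhi]; exact h2⟩
  · intro hbig
    -- improved bounds
    have hCpos : (0:ℝ) < C := lt_of_lt_of_le one_pos hC
    have hmge : 2 * C * K ^ p ≤ (m:ℝ) := by
      have h1 : (2:ℕ) ^ (⌈2 * C * K ^ p⌉₊ : ℕ) ≤ n := by exact_mod_cast hbig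
      have h2 : (⌈2 * C * K ^ p⌉₊ : ℕ) ≤ m := (Nat.le_log_iff_pow_le (by norm_num) (by omega)).mpr h1
      calc 2 * C * K ^ p ≤ (⌈2 * C * K ^ p⌉₊ : ℝ) := Nat.le_ceil _
      _ ≤ (m:ℝ) := by exact_mod_cast h2
    have hLp1 : (1:ℝ) ≤ L' ^ p := Real.one_le_rpow hL'1 (by linarith)
    have hLppos : (0:ℝ) < L' ^ p := lt_of_lt_of_le one_pos hLp1
    have hKsplit : K ^ p = K * K ^ (p - 1) := by
      rw [← Real.rpow_one_add' (by positivity) (by intro h; nlinarith)]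
      ring_nf
    have hLsplit : L' ^ p = L' * L' ^ (p - 1) := by
      rw [← Real.rpow_one_add' (by positivity) (by intro h; nlinarith)]
      ring_nf
    have hexp : L' ^ (p - 1) ≤ K ^ (p - 1) :=
      Real.rpow_le_rpow hL'pos.le hL'K (by linarith)
    have hexppos : (0:ℝ) < L' ^ (p - 1) := Real.rpow_pos_of_pos hL'pos _
    set ε := 1 / (2 * C * L' ^ p) with hεdef
    have hεpos : 0 < ε := by positivity
    have hKm : K / (m:ℝ) ≤ ε * L' := by
      have hmain : 2 * C * K * L' ^ (p - 1) ≤ (m:ℝ) := by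
        calc 2 * C * K * L' ^ (p - 1) ≤ 2 * C * K * K ^ (p - 1) :=
              mul_le_mul_of_nonneg_left hexp (by positivity)
        _ = 2 * C * K ^ p := by rw [hKsplit]; ring
        _ ≤ (m:ℝ) := hmge
      have hεL : ε * L' = 1 / (2 * C * L' ^ (p - 1)) := by
        rw [hεdef, hLsplit]
        field_simp
      rw [hεL, div_le_div_iff₀ hmR (by positivity)]
      nlinarith
    have h1CL : (1:ℝ) ≤ C * L' ^ p := by
      nlinarith [mul_le_mul hC hLp1 (by norm_num : (0:ℝ) ≤ 1) hCpos.le]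
    have hε2 : ε ≤ 1 / 2 := by
      rw [hεdef, div_le_div_iff₀ (by positivity) (by norm_num)]
      linarith
    have hKmlam := mul_le_mul_of_nonneg_left hKm hlam.le
    have hlo2 : lam * (1 - ε) * L' ≤ lam * (L' - K / (m:ℝ)) := by nlinarith [hKmlam]
    have hhi2 : lam * (L' + K / (m:ℝ)) ≤ lam * (1 + ε) * L' := by nlinarith [hKmlam]
    have imp : ∀ x ∈ ({x₀, x₀ + 2 ^ i, x₀ + 2 ^ i + 2 ^ i} : Set ℕ),
        ∀ y ∈ ({x₀, x₀ + 2 ^ i, x₀ + 2 ^ i + 2 ^ i} : Set ℕ),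
        lam * (1 - ε) * L' * |(x : ℝ) - (y : ℝ)| ≤ dist (f x) (f y) ∧
        dist (f x) (f y) ≤ lam * (1 + ε) * L' * |(x : ℝ) - (y : ℝ)| := by
      intro x hx y hy
      obtain ⟨h1, h2⟩ := key x hx y hy
      constructor
      · exact le_trans (mul_le_mul_of_nonneg_right hlo2 (abs_nonneg _)) h1
      · exact le_trans h2 (mul_le_mul_of_nonneg_right hhi2 (abs_nonneg _))
    refine ⟨imp, ?_⟩
    -- distortion bound
    have hBlopos : (0:ℝ) < lam * (1 - ε) * L' :=
      mul_pos (mul_pos hlam (by linarith)) hL'pos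
    have hBhipos : (0:ℝ) < lam * (1 + ε) * L' :=
      mul_pos (mul_pos hlam (by linarith)) hL'pos
    set Z := ({x₀, x₀ + 2 ^ i, x₀ + 2 ^ i + 2 ^ i} : Set ℕ) with hZ
    have hne01 : x₀ ≠ x₀ + 2 ^ i := by
      have := pow_pos (by norm_num : (0:ℕ) < 2) i; omega
    have hz0Z : x₀ ∈ Z := by simp [hZ]
    have hz1Z : x₀ + 2 ^ i ∈ Z := by simp [hZ]
    have habsne : ∀ x y : ℕ, x ≠ y → (0:ℝ) < |(x:ℝ) - (y:ℝ)| := by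
      intro x y hxy
      rw [abs_pos, sub_ne_zero]
      exact_mod_cast hxy
    have hdistpos : ∀ x ∈ Z, ∀ y ∈ Z, x ≠ y → (0:ℝ) < dist (f x) (f y) := by
      intro x hx y hy hxy
      exact lt_of_lt_of_le (mul_pos hBlopos (habsne x y hxy)) (imp x hx y hy).1
    rw [distortionOn]
    set T1 := {r : ℝ | ∃ x ∈ Z, ∃ y ∈ Z, x ≠ y ∧ r = dist (f x) (f y) / |(x : ℝ) - (y : ℝ)|}
      with hT1def
    set T2 := {r : ℝ | ∃ x ∈ Z, ∃ y ∈ Z, x ≠ y ∧ r = |(x : ℝ) - (y : ℝ)| / dist (f x) (f y)}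
      with hT2def
    have hT1ub : ∀ r ∈ T1, r ≤ lam * (1 + ε) * L' := by
      rintro r ⟨x, hx, y, hy, hxy, rfl⟩
      rw [div_le_iff₀ (habsne x y hxy)]
      exact (imp x hx y hy).2
    have hT2ub : ∀ r ∈ T2, r ≤ 1 / (lam * (1 - ε) * L') := by
      rintro r ⟨x, hx, y, hy, hxy, rfl⟩
      have h1 := (imp x hx y hy).1
      have h2 := hdistpos x hx y hy hxy
      rw [div_le_div_iff₀ h2 hBlopos]
      calc |(x:ℝ) - y| * (lam * (1 - ε) * L') = lam * (1 - ε) * L' * |(x:ℝ) - y| := by ring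
      _ ≤ dist (f x) (f y) := h1
      _ = 1 * dist (f x) (f y) := (one_mul _).symm
    have hT1ne : T1.Nonempty := ⟨_, x₀, hz0Z, x₀ + 2 ^ i, hz1Z, hne01, rfl⟩
    have hT2ne : T2.Nonempty := ⟨_, x₀, hz0Z, x₀ + 2 ^ i, hz1Z, hne01, rfl⟩
    have hD1 : sSup T1 ≤ lam * (1 + ε) * L' := csSup_le hT1ne hT1ub
    have hD2 : sSup T2 ≤ 1 / (lam * (1 - ε) * L') := csSup_le hT2ne hT2ub
    have hD2nonneg : 0 ≤ sSup T2 := by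
      refine le_trans ?_ (le_csSup ⟨_, hT2ub⟩ (hT2ne.choose_spec))
      obtain ⟨x, hx, y, hy, hxy, hr⟩ := hT2ne.choose_spec
      rw [hr]
      positivity
    calc sSup T1 * sSup T2 ≤ (lam * (1 + ε) * L') * (1 / (lam * (1 - ε) * L')) :=
          mul_le_mul hD1 hD2 hD2nonneg hBhipos.le
    _ = (1 + ε) / (1 - ε) := by
        rw [mul_one_div, div_eq_div_iff hBlopos.ne' (by linarith : (0:ℝ) < 1 - ε).ne']
        ring
    _ ≤ 1 + 4 * ε := by
        rw [div_le_iff₀ (by linarith)]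
        nlinarith
    _ = 1 + 2 / (C * L' ^ p) := by
        have h4 : 4 * ε = 2 / (C * L' ^ p) := by
          rw [hεdef, mul_one_div, div_eq_div_iff (by positivity) (by positivity)]
          ring
        rw [h4]
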